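/- arXiv:1611.09836 — 4 statements merged into one kernel-verified Lean document; each statement's English description precedes it below -/
import Mathlib

section
/- For vertices a, b of the path P_n, the equality |sin(aπj/(n+1))| = |sin(bπj/(n+1))| holds for all j = 1,…,n if and only if a + b = n + 1 or a = b. -/
open Real Set

/-!
Taking `j = 1`, both angles `aπ/(n+1)` and `bπ/(n+1)` lie in `(0, π)`, where `sin` is positive, so
the hypothesis says `sin x = sin y`; on `(0, π)` this forces `x = y` or `x + y = π`. Conversely, if
`a + b = n + 1` then `aπj/(n+1) = jπ - bπj/(n+1)`, and `|sin (jπ - t)| = |sin t|`.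
-/

lemma Real.abs_sin_nat_mul_pi_sub (j : ℕ) (x : ℝ) : |sin (j * π - x)| = |sin x| := by
  simp [sin_nat_mul_pi_sub, abs_mul]

lemma Real.eq_or_add_eq_pi_of_sin_eq_sin {x y : ℝ} (hx : x ∈ Ioo 0 π) (hy : y ∈ Ioo 0 π)
    (h : sin x = sin y) : x = y ∨ x + y = π := by
  obtain ⟨hx0, hxπ⟩ := hx
  obtain ⟨hy0, hyπ⟩ := hy
  have int_eq_zero {k : ℤ} (hlo : -1 < (k : ℝ)) (hhi : (k : ℝ) < 1) : k = 0 := by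
    rw [← Int.abs_lt_one_iff, ← Int.cast_lt (R := ℝ), Int.cast_abs, Int.cast_one, abs_lt]
    exact ⟨hlo, hhi⟩
  obtain ⟨k, hk | hk⟩ := sin_eq_sin_iff.mp h
  · obtain rfl : k = 0 := int_eq_zero (by nlinarith) (by nlinarith)
    left
    simp only [Int.cast_zero, mul_zero, zero_mul, zero_add] at hk
    exact hk.symm
  · obtain rfl : k = 0 := int_eq_zero (by nlinarith) (by nlinarith)
    right
    simp only [Int.cast_zero, mul_zero, zero_add, one_mul] at hk
    linarith

lemma mul_pi_div_mem_Ioo {a N : ℝ} (ha : 0 < a) (haN : a < N) : a * π / N ∈ Ioo 0 π := by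
  have hN : 0 < N := ha.trans haN
  refine ⟨by positivity, ?_⟩
  rw [div_lt_iff₀ hN]
  nlinarith [pi_pos]

theorem path_strongly_cospectral_iff (n a b : ℕ) (ha1 : 1 ≤ a) (han : a ≤ n)
    (hb1 : 1 ≤ b) (hbn : b ≤ n) :
    (∀ j : ℕ, 1 ≤ j → j ≤ n →
      |Real.sin (a * Real.pi * j / (n + 1))| = |Real.sin (b * Real.pi * j / (n + 1))|) ↔
    (a + b = n + 1 ∨ a = b) := by
  constructor
  · intro h
    have hx := mul_pi_div_mem_Ioo (a := a) (N := n + 1) (by positivity) (by norm_cast; omega)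
    have hy := mul_pi_div_mem_Ioo (a := b) (N := n + 1) (by positivity) (by norm_cast; omega)
    have h1 := h 1 le_rfl (ha1.trans han)
    rw [Nat.cast_one, mul_one, mul_one, abs_of_pos (sin_pos_of_mem_Ioo hx),
      abs_of_pos (sin_pos_of_mem_Ioo hy)] at h1
    rcases eq_or_add_eq_pi_of_sin_eq_sin hx hy h1 with hxy | hxy
    · right
      field_simp at hxy
      exact_mod_cast hxy
    · left
      field_simp at hxy
      exact_mod_cast hxy
  · rintro (hab | rfl) j - -
    · have ha : (a : ℝ) = n + 1 - b := by rw [eq_sub_iff_add_eq]; exact_mod_cast hab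
      have harg : (a : ℝ) * π * j / (n + 1) = j * π - b * π * j / (n + 1) := by
        rw [ha]; field_simp
      rw [harg, abs_sin_nat_mul_pi_sub]
    · rfl
end

section
/- Let p be an odd prime, t ≥ 1, m = 2^t p. Suppose integers ℓ_1,…,ℓ_{m−1} satisfy that Φ_{2m}(x) divides P(x) = ∑_{j=1}^{m−1} ℓ_j x^j + ∑_{j=m+1}^{2m−1} ℓ_{2m−j} x^j, and ℓ_j = 0 whenever 2p | j. Then ℓ_j = ℓ_{m−j} for every even index j with 1 ≤ j ≤ m−1. -/
/-!
Put `E = ∑_{k=1}^{m-1} (ℓ_k - ℓ_{m-k}) X^k`. Then `P = E + (X^m + 1) G` for some `G`, and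
`Φ_{2m} ∣ X^m + 1`, so `Φ_{2m} ∣ E`. With `q = 2^t` we have
`Φ_{2m}(X) = Φ_{2p}(X^q) = ∑_{i<p} (-1)^i X^{qi}`, and `deg E < m` forces `E = Φ_{2m} S` with
`deg S < q`; so the coefficient of `X^{qi+r}` in `E` (`i < p`, `r < q`) is `(-1)^i S_r`.
For even `r` some `i₀ < p` makes `qi₀ + r` a multiple of `2p`, where both `ℓ`-terms vanish;
hence `S_r = 0`, and `E` has no monomial `X^{qi+r}` at all. Since `q` is even, every even `j`
has even residue `r = j mod q`.
-/

open Polynomial Finset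

namespace Polynomial

variable {R : Type*}

theorem expand_prime_pow_cyclotomic [CommRing R] {p n : ℕ} (hp : p.Prime) (hpn : p ∣ n)
    (k : ℕ) : expand R (p ^ k) (cyclotomic n R) = cyclotomic (n * p ^ k) R := by
  induction k generalizing n with
  | zero => simp
  | succ k ih =>
    rw [pow_succ, expand_mul, cyclotomic_expand_eq_cyclotomic hp hpn,
      ih (hpn.mul_right p), mul_assoc, mul_comm p]

theorem cyclotomic_two_mul_mul_X_add_one [CommRing R] {p : ℕ} (hp : p.Prime) (hp2 : p ≠ 2) :
    cyclotomic (2 * p) R * (X + 1) = X ^ p + 1 := by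
  have h := cyclotomic_expand_eq_cyclotomic_mul hp
    (fun h => hp2 ((Nat.prime_dvd_prime_iff_eq hp Nat.prime_two).1 h)) R
  rw [cyclotomic_two] at h
  simpa using h.symm

theorem cyclotomic_two_mul_dvd_X_pow_add_one [CommRing R] [IsDomain R] {n : ℕ} (hn : n ≠ 0) :
    cyclotomic (2 * n) R ∣ X ^ n + 1 := by
  have h := X_pow_sub_one_mul_prod_cyclotomic_eq_X_pow_sub_one_of_dvd R
    (dvd_mul_left n 2) (by positivity)
  have hmem : 2 * n ∈ (2 * n).divisors \ n.divisors := by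
    simp [hn, Nat.not_dvd_of_pos_of_lt (Nat.pos_of_ne_zero hn) (by omega : n < 2 * n)]
  have hsub : (X ^ n - 1 : R[X]) ≠ 0 := X_pow_sub_C_ne_zero (Nat.pos_of_ne_zero hn) 1
  have hfactor : (X ^ n - 1 : R[X]) * (X ^ n + 1) = X ^ (2 * n) - 1 := by ring
  rw [← mul_dvd_mul_iff_left hsub, hfactor, ← h]
  exact mul_dvd_mul_left _ (dvd_prod_of_mem _ hmem)

theorem coeff_eq_neg_one_pow_of_mul_X_add_one [Ring R] {f : R[X]} {n : ℕ}
    (hf : f * (X + 1) = X ^ n + 1) {i : ℕ} (hi : i < n) : f.coeff i = (-1) ^ i := by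
  induction i with
  | zero =>
    have h0 := congrArg (coeff · 0) hf
    simpa [mul_add, coeff_X_pow, hi.ne] using h0
  | succ i ih =>
    have hsucc := congrArg (coeff · (i + 1)) hf
    simp only [mul_add, mul_one, coeff_add, coeff_mul_X, coeff_X_pow, coeff_one] at hsucc
    rw [if_neg (by omega), if_neg (by omega), add_zero, ih (by omega)] at hsucc
    rw [pow_succ, mul_neg_one]
    exact eq_neg_of_add_eq_zero_right hsucc

theorem coeff_cyclotomic_two_mul [CommRing R] {p : ℕ} (hp : p.Prime) (hp2 : p ≠ 2) {i : ℕ}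
    (hi : i < p) : (cyclotomic (2 * p) R).coeff i = (-1) ^ i :=
  coeff_eq_neg_one_pow_of_mul_X_add_one (cyclotomic_two_mul_mul_X_add_one hp hp2) hi

theorem natDegree_cyclotomic_two_mul [Ring R] [Nontrivial R] {p : ℕ} (hp : p.Prime)
    (hodd : Odd p) : (cyclotomic (2 * p) R).natDegree = p - 1 := by
  rw [natDegree_cyclotomic, Nat.totient_mul (Nat.coprime_two_left.2 hodd), Nat.totient_two,
    Nat.totient_prime hp, one_mul]

theorem coeff_expand_mul_add [CommSemiring R] {q : ℕ} (f : R[X]) {S : R[X]}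
    (hS : S.natDegree < q) (i : ℕ) {r : ℕ} (hr : r < q) :
    (expand R q f * S).coeff (q * i + r) = f.coeff i * S.coeff r := by
  induction f using Polynomial.induction_on' with
  | add f g hf hg => simp [add_mul, hf, hg]
  | monomial n a =>
    rw [expand_monomial, ← C_mul_X_pow_eq_monomial, mul_assoc, coeff_C_mul, coeff_X_pow_mul',
      coeff_monomial]
    rcases lt_trichotomy n i with hlt | rfl | hgt
    · have : n * q + q ≤ q * i := by nlinarith
      rw [if_neg hlt.ne, coeff_eq_zero_of_natDegree_lt (by omega), ite_self, mul_zero, zero_mul]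
    · simp [mul_comm q]
    · have : q * i + q ≤ n * q := by nlinarith
      rw [if_neg (by omega), if_neg hgt.ne', mul_zero, zero_mul]

theorem coeff_expand_mul_add_eq_zero [CommSemiring R] [NoZeroDivisors R] {q : ℕ} {f S : R[X]}
    (hS : S.natDegree < q) {i₀ r : ℕ} (hr : r < q) (hf : f.coeff i₀ ≠ 0)
    (h₀ : (expand R q f * S).coeff (q * i₀ + r) = 0) (i : ℕ) :
    (expand R q f * S).coeff (q * i + r) = 0 := by
  rw [coeff_expand_mul_add f hS i₀ hr] at h₀
  rw [coeff_expand_mul_add f hS i hr, (mul_eq_zero.1 h₀).resolve_left hf, mul_zero]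

theorem natDegree_lt_of_natDegree_expand_mul_lt [CommSemiring R] [NoZeroDivisors R] {q : ℕ}
    {f S : R[X]} (hf : f ≠ 0) (h : (expand R q f * S).natDegree < q * (f.natDegree + 1)) :
    S.natDegree < q := by
  have hq : 0 < q := Nat.pos_of_mul_pos_right (Nat.zero_lt_of_lt h)
  rcases eq_or_ne S 0 with rfl | hS
  · simpa using hq
  rw [natDegree_mul ((expand_ne_zero hq).2 hf) hS, natDegree_expand] at h
  nlinarith

end Polynomial

section SkewPart

variable {R : Type*} [CommRing R]

noncomputable def skewPart (c : ℕ → R) (m : ℕ) : R[X] :=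
  ∑ k ∈ Icc 1 (m - 1), C (c k - c (m - k)) * X ^ k

theorem coeff_skewPart (c : ℕ → R) (m k : ℕ) :
    (skewPart c m).coeff k = if k ∈ Icc 1 (m - 1) then c k - c (m - k) else 0 := by
  simp only [skewPart, finsetSum_coeff, coeff_C_mul_X_pow, sum_ite_eq]

theorem coeff_skewPart_eq_zero_of_dvd {c : ℕ → R} {m n k : ℕ}
    (hc : ∀ j, n ∣ j → c j = 0) (hnm : n ∣ m) (hnk : n ∣ k) :
    (skewPart c m).coeff k = 0 := by
  rw [coeff_skewPart, hc k hnk, hc (m - k) (Nat.dvd_sub hnm hnk), sub_zero, ite_self]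

theorem natDegree_skewPart_lt (c : ℕ → R) {m : ℕ} (hm : m ≠ 0) :
    (skewPart c m).natDegree < m := by
  refine (natDegree_sum_le_of_forall_le _ _ fun k hk => ?_).trans_lt (by omega : m - 1 < m)
  exact (natDegree_C_mul_X_pow_le _ k).trans (mem_Icc.1 hk).2

theorem sum_add_sum_reflect_eq (c : ℕ → R) (m : ℕ) :
    ∑ j ∈ Icc 1 (m - 1), C (c j) * X ^ j +
        ∑ j ∈ Icc (m + 1) (2 * m - 1), C (c (2 * m - j)) * X ^ j
      = skewPart c m + (X ^ m + 1) * ∑ k ∈ Icc 1 (m - 1), C (c (m - k)) * X ^ k := by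
  have hshift : ∑ j ∈ Icc (m + 1) (2 * m - 1), C (c (2 * m - j)) * X ^ j
      = ∑ k ∈ Icc 1 (m - 1), C (c (m - k)) * X ^ (m + k) := by
    rw [show 2 * m - 1 = m + (m - 1) by omega, ← map_add_left_Icc, sum_map]
    refine sum_congr rfl fun k hk => ?_
    rw [addLeftEmbedding_apply, show 2 * m - (m + k) = m - k by omega]
  rw [hshift, skewPart, mul_sum, ← sum_add_distrib, ← sum_add_distrib]
  refine sum_congr rfl fun k _ => ?_
  rw [map_sub]
  ring

end SkewPart

theorem exists_lt_dvd_mul_add {p q : ℕ} [NeZero p] (h : q.Coprime p) (r : ℕ) :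
    ∃ i < p, p ∣ q * i + r := by
  refine ⟨((-r : ZMod p) * (q : ZMod p)⁻¹).val, ZMod.val_lt _, ?_⟩
  rw [← ZMod.natCast_eq_zero_iff]
  push_cast
  rw [ZMod.natCast_val, ZMod.cast_id', id]
  linear_combination (-(r : ZMod p)) * ZMod.coe_mul_inv_eq_one q h

theorem coeff_symmetry (p t : ℕ) (hp : p.Prime) (hodd : Odd p) (ht : 1 ≤ t)
    (m : ℕ) (hm : m = 2 ^ t * p) (ℓ : ℕ → ℤ)
    (hℓ0 : ∀ j, 2 * p ∣ j → ℓ j = 0)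
    (hdvd : Polynomial.cyclotomic (2 * m) ℚ ∣
      (∑ j ∈ Finset.Icc 1 (m - 1), Polynomial.C ((ℓ j : ℚ)) * Polynomial.X ^ j +
        ∑ j ∈ Finset.Icc (m + 1) (2 * m - 1),
          Polynomial.C ((ℓ (2 * m - j) : ℚ)) * Polynomial.X ^ j)) :
    ∀ j, 1 ≤ j → j ≤ m - 1 → Even j → ℓ j = ℓ (m - j) := by
  intro j hj1 hjm hjeven
  have hm0 : m ≠ 0 := by rw [hm]; exact mul_ne_zero (by positivity) hp.ne_zero
  have hp2 : p ≠ 2 := by rintro rfl; exact (Nat.not_odd_iff_even.2 even_two) hodd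
  have h2 : 2 ∣ 2 ^ t := dvd_pow_self 2 (by omega)
  have h2pm : 2 * p ∣ m := hm ▸ mul_dvd_mul_right h2 p
  have : NeZero p := ⟨hp.ne_zero⟩
  have hΦ : cyclotomic (2 * m) ℚ = expand ℚ (2 ^ t) (cyclotomic (2 * p) ℚ) := by
    rw [expand_prime_pow_cyclotomic Nat.prime_two (dvd_mul_right 2 p), hm]
    ring_nf
  obtain ⟨S, hS⟩ : cyclotomic (2 * m) ℚ ∣ skewPart (fun j => (ℓ j : ℚ)) m := by
    rw [sum_add_sum_reflect_eq] at hdvd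
    exact (dvd_add_left ((cyclotomic_two_mul_dvd_X_pow_add_one hm0).mul_right _)).1 hdvd
  rw [hΦ] at hS
  have hSdeg : S.natDegree < 2 ^ t := by
    refine natDegree_lt_of_natDegree_expand_mul_lt (cyclotomic_ne_zero (2 * p) ℚ) ?_
    rw [← hS, natDegree_cyclotomic_two_mul hp hodd, Nat.sub_add_cancel hp.one_le, ← hm]
    exact natDegree_skewPart_lt _ hm0
  obtain ⟨i₀, hi₀, hpdvd⟩ :=
    exists_lt_dvd_mul_add ((Nat.coprime_two_left.2 hodd).pow_left t) (j % 2 ^ t)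
  have h2p : 2 * p ∣ 2 ^ t * i₀ + j % 2 ^ t :=
    (Nat.coprime_two_left.2 hodd).mul_dvd_of_dvd_of_dvd
      (dvd_add (h2.mul_right _) ((Nat.dvd_mod_iff h2).2 hjeven.two_dvd)) hpdvd
  have hvanish := coeff_expand_mul_add_eq_zero hSdeg (Nat.mod_lt j (by positivity))
    (by rw [coeff_cyclotomic_two_mul hp hp2 hi₀]; exact pow_ne_zero _ (by norm_num))
    (hS ▸ coeff_skewPart_eq_zero_of_dvd (fun k hk => by simp [hℓ0 k hk]) h2pm h2p) (j / 2 ^ t)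
  rw [Nat.div_add_mod, ← hS, coeff_skewPart, if_pos (mem_Icc.2 ⟨hj1, hjm⟩), sub_eq_zero]
    at hvanish
  exact_mod_cast hvanish
end

section
/- Let p be an odd prime, t ≥ 1, m = 2^t p, and suppose Φ_{2m} divides P(x) = ∑_{j=1}^{m−1} ℓ_j x^j + ∑_{j=m+1}^{2m−1} ℓ_{2m−j} x^j with integer coefficients ℓ_j satisfying ℓ_j = 0 whenever 2p | j. If additionally ∑_{j=1}^{m−1} ℓ_j = 0, then ∑_{j even, 1 ≤ j ≤ m−1} ℓ_j is even. -/
open Polynomial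

private lemma coeff_sum_CX {R : Type*} [Semiring R] (s : Finset ℕ) (f : ℕ → R) (k : ℕ) :
    (∑ j ∈ s, Polynomial.C (f j) * Polynomial.X ^ j).coeff k =
      if k ∈ s then f k else 0 := by
  rw [Polynomial.finset_sum_coeff]
  simp only [Polynomial.coeff_C_mul, Polynomial.coeff_X_pow, mul_ite, mul_one, mul_zero]
  exact Finset.sum_ite_eq s k f

theorem parity_condition (p t : ℕ) (hp : p.Prime) (hodd : Odd p) (ht : 1 ≤ t)
    (m : ℕ) (hm : m = 2 ^ t * p) (ℓ : ℕ → ℤ)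
    (hℓ0 : ∀ j, 2 * p ∣ j → ℓ j = 0)
    (hdvd : Polynomial.cyclotomic (2 * m) ℚ ∣
      (∑ j ∈ Finset.Icc 1 (m - 1), Polynomial.C ((ℓ j : ℚ)) * Polynomial.X ^ j +
        ∑ j ∈ Finset.Icc (m + 1) (2 * m - 1),
          Polynomial.C ((ℓ (2 * m - j) : ℚ)) * Polynomial.X ^ j))
    (hsum : ∑ j ∈ Finset.Icc 1 (m - 1), ℓ j = 0) :
    Even (∑ j ∈ (Finset.Icc 1 (m - 1)).filter (fun j => Even j), ℓ j) := by
  haveI : Fact p.Prime := ⟨hp⟩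
  have hpodd : p % 2 = 1 := Nat.odd_iff.mp hodd
  have hp3 : 3 ≤ p := by have := hp.two_le; omega
  have h2t : 2 ≤ 2 ^ t := by
    calc 2 = 2 ^ 1 := (pow_one 2).symm
    _ ≤ 2 ^ t := Nat.pow_le_pow_right (by norm_num) ht
  have hpow1 : 2 ^ t = 2 ^ (t - 1) * 2 := by
    rw [← pow_succ]; congr 1; omega
  have hmfact : m = 2 * p * 2 ^ (t - 1) := by rw [hm, hpow1]; ring
  have hm6 : 6 ≤ m := by
    calc 6 = 2 * 3 := by norm_num
    _ ≤ 2 ^ t * p := Nat.mul_le_mul h2t hp3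
    _ = m := hm.symm
  -- step 1: divisibility over ℤ
  set Pz : Polynomial ℤ := ∑ j ∈ Finset.Icc 1 (m - 1), C (ℓ j) * X ^ j +
      ∑ j ∈ Finset.Icc (m + 1) (2 * m - 1), C (ℓ (2 * m - j)) * X ^ j with hPz
  have hdvdZ : cyclotomic (2 * m) ℤ ∣ Pz := by
    rw [← Polynomial.map_dvd_map (Int.castRingHom ℚ) Int.cast_injective
      (Polynomial.cyclotomic.monic _ ℤ), map_cyclotomic_int]
    have hmap : Pz.map (Int.castRingHom ℚ) =
        (∑ j ∈ Finset.Icc 1 (m - 1), Polynomial.C ((ℓ j : ℚ)) * Polynomial.X ^ j +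
          ∑ j ∈ Finset.Icc (m + 1) (2 * m - 1),
            Polynomial.C ((ℓ (2 * m - j) : ℚ)) * Polynomial.X ^ j) := by
      simp [hPz, Polynomial.map_add, Polynomial.map_sum, Polynomial.map_mul,
        Polynomial.map_pow, Polynomial.map_C, Polynomial.map_X]
    rw [hmap]; exact hdvd
  -- step 2: reduce mod 2
  set Pr : Polynomial (ZMod 2) := Pz.map (Int.castRingHom (ZMod 2)) with hPrdef
  have hdvdR : cyclotomic (2 * m) (ZMod 2) ∣ Pr := by
    rw [← map_cyclotomic_int (2 * m) (ZMod 2)]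
    exact Polynomial.map_dvd _ hdvdZ
  -- step 3: cyclotomic factorization mod 2
  have hcyc : cyclotomic (2 * m) (ZMod 2) = cyclotomic p (ZMod 2) ^ (2 ^ t) := by
    have h1 : 2 * m = 2 ^ (t + 1) * p := by rw [hm, pow_succ]; ring
    rw [h1, cyclotomic_mul_prime_pow_eq (ZMod 2) (by omega) (Nat.succ_pos t)]
    have h2 : 2 ^ (t + 1) - 2 ^ (t + 1 - 1) = 2 ^ t := by
      simp only [Nat.add_sub_cancel]
      have : 2 ^ (t + 1) = 2 * 2 ^ t := by rw [pow_succ]; ring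
      omega
    rw [h2]
  have hXm : ((X : Polynomial (ZMod 2)) ^ m - 1) =
      (cyclotomic p (ZMod 2) * (X - 1)) ^ 2 ^ t := by
    rw [cyclotomic_prime_mul_X_sub_one, sub_pow_char_pow, one_pow, ← pow_mul,
      show p * 2 ^ t = m by rw [hm, mul_comm]]
  -- step 4: the symmetrized polynomial D
  set D : Polynomial (ZMod 2) := ∑ j ∈ Finset.Icc 1 (m - 1),
      C (((ℓ j : ZMod 2)) + ((ℓ (m - j) : ZMod 2))) * X ^ j with hDdef
  set Q : Polynomial (ZMod 2) := ∑ j ∈ Finset.Icc 1 (m - 1),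
      C ((ℓ (m - j) : ZMod 2)) * X ^ j with hQdef
  have hre : ∑ j ∈ Finset.Icc (m + 1) (2 * m - 1),
        C ((ℓ (2 * m - j) : ZMod 2)) * X ^ j
      = ∑ j ∈ Finset.Icc 1 (m - 1), C ((ℓ (m - j) : ZMod 2)) * X ^ (j + m) := by
    apply Finset.sum_bij' (fun j _ => j - m) (fun j _ => j + m)
    · intro a ha
      simp only [Finset.mem_Icc] at ha ⊢
      omega
    · intro a ha
      simp only [Finset.mem_Icc] at ha ⊢
      omega
    · intro a ha
      simp only [Finset.mem_Icc] at ha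
      omega
    · intro a ha
      simp only [Finset.mem_Icc] at ha
      omega
    · intro a ha
      simp only [Finset.mem_Icc] at ha
      have h1 : m - (a - m) = 2 * m - a := by omega
      have h2 : a - m + m = a := by omega
      rw [h1, h2]
  have hPrD : Pr = D + ((X : Polynomial (ZMod 2)) ^ m - 1) * Q := by
    rw [hPrdef, hPz, Polynomial.map_add, Polynomial.map_sum, Polynomial.map_sum]
    simp only [Polynomial.map_mul, Polynomial.map_pow, Polynomial.map_C, Polynomial.map_X,
      Int.coe_castRingHom]
    rw [hre, hDdef, hQdef, Finset.mul_sum, ← Finset.sum_add_distrib, ← Finset.sum_add_distrib]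
    apply Finset.sum_congr rfl
    intro j hj
    rw [map_add, pow_add]
    push_cast
    ring
  -- step 5: divisibility of D
  have hdvdD : cyclotomic p (ZMod 2) ^ 2 ^ t ∣ D := by
    have h1 : cyclotomic p (ZMod 2) ^ 2 ^ t ∣ ((X : Polynomial (ZMod 2)) ^ m - 1) := by
      rw [hXm, mul_pow]; exact dvd_mul_right _ _
    have h2 : D = Pr - ((X : Polynomial (ZMod 2)) ^ m - 1) * Q := by rw [hPrD]; ring
    rw [h2]
    exact dvd_sub (hcyc ▸ hdvdR) (h1.mul_right Q)
  obtain ⟨G, hG⟩ := hdvdD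
  have hdegD : D.natDegree ≤ m - 1 := by
    apply Polynomial.natDegree_sum_le_of_forall_le
    intro j hj
    exact (Polynomial.natDegree_C_mul_X_pow_le _ _).trans (Finset.mem_Icc.mp hj).2
  -- step 6: shift-invariance of coefficients of D
  have hstep : ∀ N, 2 ^ t ≤ N → N ≤ m - 1 → D.coeff N = D.coeff (N - 2 ^ t) := by
    by_cases hG0 : G = 0
    · intro N _ _
      rw [hG, hG0, mul_zero]
      simp
    · have hdegG : G.natDegree ≤ 2 ^ t - 1 := by
        have hc : (cyclotomic p (ZMod 2) ^ 2 ^ t).natDegree = 2 ^ t * (p - 1) := by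
          rw [Polynomial.natDegree_pow, Polynomial.natDegree_cyclotomic,
            Nat.totient_prime hp]
        have hne : cyclotomic p (ZMod 2) ^ 2 ^ t ≠ 0 :=
          pow_ne_zero _ (Polynomial.cyclotomic_ne_zero p (ZMod 2))
        have hd := Polynomial.natDegree_mul hne hG0
        rw [← hG, hc] at hd
        have hmm : 2 ^ t * (p - 1) + 2 ^ t = 2 ^ t * p := by
          rw [← Nat.mul_succ]; congr 1; omega
        omega
      intro N hN1 hN2
      have hmain : D * X ^ 2 ^ t - D = G * X ^ m - G := by
        have h1 : ((X : Polynomial (ZMod 2)) - 1) ^ 2 ^ t = X ^ 2 ^ t - 1 := by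
          rw [sub_pow_char_pow, one_pow]
        calc D * X ^ 2 ^ t - D = D * (X ^ 2 ^ t - 1) := by ring
        _ = (cyclotomic p (ZMod 2) ^ 2 ^ t * G) * ((X - 1) ^ 2 ^ t) := by rw [hG, h1]
        _ = (cyclotomic p (ZMod 2) * (X - 1)) ^ 2 ^ t * G := by rw [mul_pow]; ring
        _ = ((X : Polynomial (ZMod 2)) ^ m - 1) * G := by rw [← hXm]
        _ = G * X ^ m - G := by ring
      have hco := congrArg (fun q => Polynomial.coeff q N) hmain
      simp only [Polynomial.coeff_sub, Polynomial.coeff_mul_X_pow'] at hco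
      rw [if_pos hN1, if_neg (by omega : ¬ m ≤ N)] at hco
      have hGN : G.coeff N = 0 :=
        Polynomial.coeff_eq_zero_of_natDegree_lt (by omega)
      rw [hGN, sub_zero] at hco
      exact (sub_eq_zero.mp hco).symm
  have hiter : ∀ i r, r < 2 ^ t → 2 ^ t * i + r ≤ m - 1 →
      D.coeff (2 ^ t * i + r) = D.coeff r := by
    intro i
    induction i with
    | zero => intro r _ _; norm_num
    | succ n ih =>
      intro r hr hle
      have h1 : 2 ^ t * (n + 1) + r = (2 ^ t * n + r) + 2 ^ t := by ring
      have h2 := hstep ((2 ^ t * n + r) + 2 ^ t) (by omega) (by omega)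
      rw [show (2 ^ t * n + r) + 2 ^ t - 2 ^ t = 2 ^ t * n + r by omega] at h2
      rw [h1, h2]
      exact ih r hr (by omega)
  have hcoeffD : ∀ N, D.coeff N =
      if N ∈ Finset.Icc 1 (m - 1) then ((ℓ N : ZMod 2) + (ℓ (m - N) : ZMod 2)) else 0 := by
    intro N
    rw [hDdef]
    exact coeff_sum_CX _ (fun j => ((ℓ j : ZMod 2) + (ℓ (m - j) : ZMod 2))) N
  have hzero : ∀ k, 2 * p * k ≤ m - 1 → D.coeff (2 * p * k) = 0 := by
    intro k hk
    rw [hcoeffD]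
    split
    · have hd1 : ℓ (2 * p * k) = 0 := hℓ0 _ (Dvd.intro k rfl)
      have hd2 : ℓ (m - 2 * p * k) = 0 := hℓ0 _ (Nat.dvd_sub ⟨2 ^ (t - 1), hmfact⟩ (Dvd.intro k rfl))
      rw [hd1, hd2]
      simp
    · rfl
  -- step 7: the key symmetry relation mod 2
  have key : ∀ j, 1 ≤ j → j ≤ m - 1 → Even j →
      (ℓ j : ZMod 2) + (ℓ (m - j) : ZMod 2) = 0 := by
    intro j hj1 hj2 hje
    have hDj : D.coeff j = (ℓ j : ZMod 2) + (ℓ (m - j) : ZMod 2) := by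
      rw [hcoeffD, if_pos (Finset.mem_Icc.mpr ⟨hj1, hj2⟩)]
    rw [← hDj]
    set r := j % 2 ^ t with hrdef
    have hrlt : r < 2 ^ t := Nat.mod_lt _ (by positivity)
    have h1 : D.coeff j = D.coeff r := by
      have hdec : 2 ^ t * (j / 2 ^ t) + r = j := Nat.div_add_mod j (2 ^ t)
      rw [← hdec]
      exact hiter _ _ hrlt (by omega)
    have hrev : r % 2 = 0 := by
      have hje' : j % 2 = 0 := Nat.even_iff.mp hje
      have h2d : (2 : ℕ) ∣ 2 ^ t := dvd_pow_self 2 (by omega)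
      rw [hrdef, Nat.mod_mod_of_dvd j h2d]
      exact hje'
    -- find a multiple of 2p congruent to r mod 2^t
    haveI : NeZero (2 ^ (t - 1)) := ⟨by positivity⟩
    have hcop : Nat.Coprime p (2 ^ (t - 1)) := by
      apply Nat.Coprime.pow_right
      exact Nat.coprime_two_right.mpr hodd
    obtain ⟨u, hu⟩ := (ZMod.isUnit_iff_coprime p (2 ^ (t - 1))).mpr hcop
    set z : ZMod (2 ^ (t - 1)) := (↑u⁻¹ : ZMod (2 ^ (t - 1))) * ((r / 2 : ℕ) : ZMod (2 ^ (t - 1))) with hzdef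
    set k := z.val with hkdef
    have hklt : k < 2 ^ (t - 1) := ZMod.val_lt z
    have hmodeq : p * k ≡ r / 2 [MOD 2 ^ (t - 1)] := by
      rw [← ZMod.natCast_eq_natCast_iff]
      push_cast
      rw [hkdef, ZMod.natCast_rightInverse z, hzdef, ← hu, ← mul_assoc,
        Units.mul_inv, one_mul]
    have hmodeq2 : 2 * p * k ≡ r [MOD 2 ^ t] := by
      have h3 := Nat.ModEq.mul_left' (c := 2) hmodeq
      rw [show 2 * (r / 2) = r by omega, show 2 * 2 ^ (t - 1) = 2 ^ t by
        rw [← pow_succ']; congr 1; omega] at h3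
      rw [show 2 * p * k = 2 * (p * k) by ring]
      exact h3
    have hkbound : 2 * p * k ≤ m - 1 := by
      have h4 : 2 * p * (k + 1) ≤ 2 * p * 2 ^ (t - 1) := Nat.mul_le_mul_left _ (by omega)
      rw [← hmfact] at h4
      have h5 : 2 * p * (k + 1) = 2 * p * k + 2 * p := by ring
      omega
    have hrr : (2 * p * k) % 2 ^ t = r := by
      have := hmodeq2
      unfold Nat.ModEq at this
      rw [Nat.mod_eq_of_lt hrlt] at this
      exact this
    have h2 : D.coeff (2 * p * k) = D.coeff r := by
      have hdec : 2 ^ t * ((2 * p * k) / 2 ^ t) + r = 2 * p * k := by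
        conv_rhs => rw [← Nat.div_add_mod (2 * p * k) (2 ^ t)]
        rw [hrr]
      rw [← hdec]
      exact hiter _ _ hrlt (by omega)
    rw [h1, ← h2]
    exact hzero k hkbound
  -- step 8: conclude parity by an involution argument
  have hS2 : ((∑ j ∈ (Finset.Icc 1 (m - 1)).filter (fun j => Even j), ℓ j : ℤ) : ZMod 2) = 0 := by
    push_cast
    apply Finset.sum_involution (fun a _ => m - a)
    · intro a ha
      simp only [Finset.mem_filter, Finset.mem_Icc] at ha
      exact key a ha.1.1 ha.1.2 ha.2
    · intro a ha hfa
      simp only [Finset.mem_filter, Finset.mem_Icc] at ha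
      intro heq
      have hm2a : m = 2 * a := by omega
      rcases Nat.lt_or_ge t 2 with h1 | h2
      · have ht1 : t = 1 := by omega
        have hap : a = p := by rw [ht1] at hm; simp [pow_one] at hm; omega
        have := Nat.even_iff.mp ha.2
        omega
      · apply hfa
        have hpow : 2 ^ t = 4 * 2 ^ (t - 2) := by
          have h' : t - 2 + 2 = t := by omega
          conv_lhs => rw [← h']
          rw [pow_add]; ring
        have hm4 : m = 4 * (2 ^ (t - 2) * p) := by rw [hm, hpow]; ring
        have ha2 : a = 2 * (2 ^ (t - 2) * p) := by omega
        have hdvd2p : 2 * p ∣ a := ⟨2 ^ (t - 2), by rw [ha2]; ring⟩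
        rw [hℓ0 a hdvd2p]
        simp
    · intro a ha
      simp only [Finset.mem_filter, Finset.mem_Icc] at ha ⊢
      refine ⟨⟨by omega, by omega⟩, ?_⟩
      have hmev : m % 2 = 0 := by
        have : (2 : ℕ) ∣ m := ⟨p * 2 ^ (t - 1), by rw [hmfact]; ring⟩
        omega
      have := Nat.even_iff.mp ha.2
      rw [Nat.even_iff]
      omega
    · intro a ha
      simp only [Finset.mem_filter, Finset.mem_Icc] at ha
      omega
  have hdvd2 : (2 : ℤ) ∣ ∑ j ∈ (Finset.Icc 1 (m - 1)).filter (fun j => Even j), ℓ j := by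
    exact_mod_cast (ZMod.intCast_zmod_eq_zero_iff_dvd _ 2).mp hS2
  obtain ⟨c, hc⟩ := hdvd2
  exact ⟨c, by omega⟩
end

section
/- Let m = 2^t p with p an odd prime and t ≥ 1, and let a be a multiple of 2^{t−1}. If integers ℓ_j (for 1 ≤ j ≤ m−1, with ℓ_j = 0 whenever 2p | j) satisfy ∑_j ℓ_j (ζ^j + ζ^{−j}) = 0 for ζ = e^{iπ/m} and ∑_j ℓ_j = 0, then ∑_{j even} ℓ_j ≡ ℓ_{2p} ≡ 0 (mod 2). -/
/-!
Since `ζ ^ m = -1`, we have `ζ ^ (-j) = -ζ ^ (m - j)`, so the hypothesis says that `ζ`, a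
primitive `2m`-th root of unity, is a root of `D = ∑ (ℓ j - ℓ (m - j)) X ^ j`; hence `Φ_{2m} ∣ D`
in `ℤ[X]`. Modulo 2, `Φ_{2m} = Φ_p(X ^ 2 ^ t)`, and as `deg D < 2 ^ t p` the quotient has degree
`< 2 ^ t`, so the coefficients of `D mod 2` are `2 ^ t`-periodic below `2 ^ t p`. Every even
residue mod `2 ^ t` contains a multiple of `2p`, where the coefficient of `D` vanishes. Hence
`ℓ j ≡ ℓ (m - j) (mod 2)` for even `j`, and pairing `j` with `m - j` in the sum of the even-indexed
`ℓ j` gives an even number.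
-/

open Polynomial Finset

theorem Polynomial.coeff_expand_mul_of_natDegree_lt {R : Type*} [CommSemiring R] {n : ℕ}
    (g Q : R[X]) (hQ : Q.natDegree < n) {k r : ℕ} (hr : r < n) :
    (expand R n g * Q).coeff (n * k + r) = g.coeff k * Q.coeff r := by
  induction g using Polynomial.induction_on' with
  | add f g hf hg => rw [map_add, add_mul, coeff_add, hf, hg, coeff_add, add_mul]
  | monomial i c =>
    rw [expand_monomial, ← C_mul_X_pow_eq_monomial, mul_assoc, coeff_C_mul, coeff_X_pow_mul',
      coeff_monomial]
    rcases lt_trichotomy i k with hik | rfl | hki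
    · have : (i + 1) * n ≤ k * n := Nat.mul_le_mul_right n hik
      rw [mul_comm n k, if_pos (by nlinarith),
        coeff_eq_zero_of_natDegree_lt (by rw [add_mul] at this; omega), if_neg hik.ne]
      simp
    · rw [if_pos (by nlinarith), if_pos rfl, mul_comm i n, Nat.add_sub_cancel_left]
    · have : (k + 1) * n ≤ i * n := Nat.mul_le_mul_right n hki
      rw [if_neg (by nlinarith), if_neg hki.ne']
      simp

theorem exists_lt_dvd_mul_add_s15 {a n : ℕ} [NeZero n] (ha : a.Coprime n) (s : ℕ) :
    ∃ k < n, n ∣ a * k + s := by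
  refine ⟨(-(s : ZMod n) * (a : ZMod n)⁻¹).val, ZMod.val_lt _, ?_⟩
  rw [← ZMod.natCast_eq_zero_iff]
  push_cast
  rw [ZMod.natCast_val, ZMod.cast_id, mul_left_comm, ZMod.coe_mul_inv_eq_one a ha]
  ring

theorem CharTwo.sum_eq_zero_of_reflection {R : Type*} [Ring R] [CharP R 2] {s : Finset ℕ}
    {m : ℕ} {f : ℕ → R} (hs : ∀ j ∈ s, j ≤ m ∧ m - j ∈ s) (hf : ∀ j ∈ s, f (m - j) = f j)
    (hmid : ∀ j ∈ s, m = 2 * j → f j = 0) : ∑ j ∈ s, f j = 0 := by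
  refine sum_involution (fun j _ => m - j) (fun j hj => ?_) (fun j hj hfj hfix => ?_)
    (fun j hj => (hs j hj).2) (fun j hj => Nat.sub_sub_self (hs j hj).1)
  · rw [hf j hj, CharTwo.add_self_eq_zero]
  · exact hfj (hmid j hj (by have := (hs j hj).1; omega))

theorem exists_lt_two_mul_dvd_two_pow_mul_add {p t r : ℕ} [NeZero p] (hp : Odd p) (ht : 1 ≤ t)
    (hr : Even r) : ∃ k < p, 2 * p ∣ 2 ^ t * k + r := by
  obtain ⟨s, rfl⟩ := hr
  obtain ⟨k, hk, hdvd⟩ :=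
    exists_lt_dvd_mul_add_s15 ((Nat.coprime_two_left.2 hp).pow_left (t - 1)) s
  refine ⟨k, hk, ?_⟩
  have h2t : 2 ^ t = 2 * 2 ^ (t - 1) := by rw [← pow_succ']; congr 1; omega
  rw [h2t, show 2 * 2 ^ (t - 1) * k + (s + s) = 2 * (2 ^ (t - 1) * k + s) by ring]
  exact mul_dvd_mul_left 2 hdvd

theorem Polynomial.cyclotomic_two_pow_mul_of_odd {R : Type*} [CommRing R] [CharP R 2] {n : ℕ}
    (hn : Odd n) (t : ℕ) :
    cyclotomic (2 ^ (t + 1) * n) R = expand R (2 ^ t) (cyclotomic n R) := by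
  induction t with
  | zero =>
    rw [pow_one, pow_zero, expand_one, mul_comm,
      cyclotomic_mul_prime_eq_pow_of_not_dvd R (Nat.not_even_iff_odd.2 hn ∘ even_iff_two_dvd.2)]
    exact pow_one _
  | succ t ih =>
    rw [pow_succ, mul_right_comm, ← cyclotomic_expand_eq_cyclotomic Nat.prime_two
      (dvd_mul_of_dvd_left (dvd_pow_self 2 t.succ_ne_zero) n), ih, ← expand_mul, pow_succ']

theorem Polynomial.coeff_eq_zero_of_even {R : Type*} [CommRing R] [Nontrivial R] {p t : ℕ}
    [Fact p.Prime] (hp : Odd p) (ht : 1 ≤ t) {D Q : R[X]}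
    (hD : D = expand R (2 ^ t) (cyclotomic p R) * Q) (hdeg : D.natDegree < 2 ^ t * p)
    (hvanish : ∀ j, 2 * p ∣ j → D.coeff j = 0) {j : ℕ} (hj : Even j) : D.coeff j = 0 := by
  have h2t : 0 < 2 ^ t := by positivity
  have hQ : Q.natDegree < 2 ^ t := by
    rcases eq_or_ne Q 0 with rfl | hQ0
    · simp [h2t]
    have := ((cyclotomic.monic p R).expand h2t).natDegree_mul' hQ0
    rw [← hD, natDegree_expand, natDegree_cyclotomic, Nat.totient_prime Fact.out,
      Nat.sub_one_mul, mul_comm p] at this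
    have := Nat.le_mul_of_pos_right (2 ^ t) (Fact.out : p.Prime).pos
    omega
  have hcoeff : ∀ k < p, ∀ r < 2 ^ t, D.coeff (2 ^ t * k + r) = Q.coeff r := by
    intro k hk r hr
    rw [hD, coeff_expand_mul_of_natDegree_lt _ _ hQ hr, cyclotomic_prime, finsetSum_coeff]
    simp [coeff_X_pow, hk]
  have hQeven : ∀ r < 2 ^ t, Even r → Q.coeff r = 0 := by
    intro r hr hre
    obtain ⟨k, hk, hdvd⟩ := exists_lt_two_mul_dvd_two_pow_mul_add hp ht hre
    rw [← hcoeff k hk r hr, hvanish _ hdvd]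
  rcases lt_or_ge j (2 ^ t * p) with hjlt | hjge
  · have hr : j % 2 ^ t < 2 ^ t := Nat.mod_lt j h2t
    rw [← Nat.div_add_mod j (2 ^ t), hcoeff _ (Nat.div_lt_of_lt_mul hjlt) _ hr,
      hQeven _ hr (Nat.even_iff.2 ?_)]
    rw [Nat.mod_mod_of_dvd _ (dvd_pow_self 2 (by omega)), ← Nat.even_iff]
    exact hj
  · exact coeff_eq_zero_of_natDegree_lt (by omega)

noncomputable def reflectionDiffPoly (m : ℕ) (ℓ : ℕ → ℤ) : ℤ[X] :=
  ∑ j ∈ Icc 1 (m - 1), monomial j (ℓ j - ℓ (m - j))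

theorem coeff_reflectionDiffPoly (m : ℕ) (ℓ : ℕ → ℤ) (k : ℕ) :
    (reflectionDiffPoly m ℓ).coeff k = if k ∈ Icc 1 (m - 1) then ℓ k - ℓ (m - k) else 0 := by
  simp only [reflectionDiffPoly, finsetSum_coeff, coeff_monomial]
  exact sum_ite_eq' _ _ _

theorem natDegree_reflectionDiffPoly_le (m : ℕ) (ℓ : ℕ → ℤ) :
    (reflectionDiffPoly m ℓ).natDegree ≤ m - 1 :=
  natDegree_sum_le_of_forall_le _ _ fun _ hj =>
    (natDegree_monomial_le _).trans (mem_Icc.1 hj).2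

theorem aeval_reflectionDiffPoly {K : Type*} [Field K] {m : ℕ} {ζ : K} (hζ : ζ ^ m = -1)
    (ℓ : ℕ → ℤ) :
    aeval ζ (reflectionDiffPoly m ℓ) =
      ∑ j ∈ Icc 1 (m - 1), (ℓ j : K) * (ζ ^ (j : ℤ) + ζ ^ (-(j : ℤ))) := by
  have hreflect : ∑ j ∈ Icc 1 (m - 1), (ℓ (m - j) : K) * ζ ^ j =
      ∑ j ∈ Icc 1 (m - 1), -((ℓ j : K) * ζ ^ (-(j : ℤ))) := by
    refine sum_nbij' (m - ·) (m - ·) (by simp +contextual [mem_Icc]; omega)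
      (by simp +contextual [mem_Icc]; omega) (by simp +contextual [mem_Icc]; omega)
      (by simp +contextual [mem_Icc]; omega) fun j hj => ?_
    have hjm := mem_Icc.1 hj
    have hζ0 : ζ ≠ 0 := by rintro rfl; simp [zero_pow (by omega : m ≠ 0)] at hζ
    rw [Nat.cast_sub (by omega), neg_sub, zpow_sub₀ hζ0, zpow_natCast, zpow_natCast, hζ]
    ring
  simp only [reflectionDiffPoly, map_sum, aeval_monomial, algebraMap_int_eq, eq_intCast,
    Int.cast_sub, sub_mul, sum_sub_distrib, hreflect, sum_neg_distrib, sub_neg_eq_add,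
    ← sum_add_distrib, mul_add, zpow_natCast]

theorem cyclotomic_dvd_reflectionDiffPoly {K : Type*} [Field K] [CharZero K] {m : ℕ} {ζ : K}
    (hm : 0 < m) (hζ : IsPrimitiveRoot ζ (2 * m)) {ℓ : ℕ → ℤ}
    (hzero : ∑ j ∈ Icc 1 (m - 1), (ℓ j : K) * (ζ ^ (j : ℤ) + ζ ^ (-(j : ℤ))) = 0) :
    cyclotomic (2 * m) ℤ ∣ reflectionDiffPoly m ℓ := by
  have h2m : 0 < 2 * m := by omega
  have hζm : ζ ^ m = -1 := (hζ.pow h2m (mul_comm 2 m)).eq_neg_one_of_two_right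
  rw [cyclotomic_eq_minpoly hζ h2m]
  exact minpoly.isIntegrallyClosed_dvd (hζ.isIntegral h2m)
    ((aeval_reflectionDiffPoly hζm ℓ).trans hzero)

theorem intCast_zmod_two_eq_reflect_of_even {p t m : ℕ} [Fact p.Prime] (hp : Odd p)
    (ht : 1 ≤ t) (hm : m = 2 ^ t * p) {ℓ : ℕ → ℤ} (hℓ0 : ∀ j, 2 * p ∣ j → ℓ j = 0)
    (hdvd : cyclotomic (2 * m) ℤ ∣ reflectionDiffPoly m ℓ) {j : ℕ} (hj : j ∈ Icc 1 (m - 1))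
    (hje : Even j) : (ℓ j : ZMod 2) = ℓ (m - j) := by
  obtain ⟨Q, hQ⟩ := hdvd
  set D := (reflectionDiffPoly m ℓ).map (Int.castRingHom (ZMod 2)) with hDdef
  have hD : D = expand (ZMod 2) (2 ^ t) (cyclotomic p (ZMod 2)) * Q.map (Int.castRingHom _) := by
    rw [hDdef, hQ, Polynomial.map_mul, map_cyclotomic, hm, ← mul_assoc, ← pow_succ',
      cyclotomic_two_pow_mul_of_odd hp]
  have hm0 : 0 < m := hm ▸ Nat.mul_pos (by positivity) (Fact.out : p.Prime).pos
  have hdeg : D.natDegree < 2 ^ t * p :=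
    (natDegree_map_le.trans (natDegree_reflectionDiffPoly_le m ℓ)).trans_lt (by omega)
  have h2pm : 2 * p ∣ m := hm ▸ mul_dvd_mul_right (dvd_pow_self 2 (by omega)) p
  have hvanish : ∀ i, 2 * p ∣ i → D.coeff i = 0 := by
    intro i hi
    rw [coeff_map, coeff_reflectionDiffPoly]
    split_ifs
    · rw [hℓ0 i hi, hℓ0 _ (Nat.dvd_sub h2pm hi)]; rfl
    · rfl
  have := coeff_eq_zero_of_even hp ht hD hdeg hvanish hje
  rwa [coeff_map, coeff_reflectionDiffPoly, if_pos hj, eq_intCast, Int.cast_sub,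
    sub_eq_zero] at this

theorem two_dvd_sum_filter_even {p t m : ℕ} (hp : Odd p) (ht : 1 ≤ t) (hm : m = 2 ^ t * p)
    {ℓ : ℕ → ℤ} (hℓ0 : ∀ j, 2 * p ∣ j → ℓ j = 0)
    (hreflect : ∀ j ∈ Icc 1 (m - 1), Even j → (ℓ j : ZMod 2) = ℓ (m - j)) :
    2 ∣ ∑ j ∈ (Icc 1 (m - 1)).filter (fun j => Even j), ℓ j := by
  have hmeven : Even m := hm ▸ (Nat.even_pow.2 ⟨even_two, by omega⟩).mul_right p
  have hmid : ∀ j, m = 2 * j → Even j → 2 * p ∣ j := fun j hj hje =>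
    (Nat.coprime_two_left.2 hp).mul_dvd_of_dvd_of_dvd (even_iff_two_dvd.1 hje)
      ((Nat.coprime_two_right.2 hp).dvd_of_dvd_mul_left (hj ▸ hm ▸ dvd_mul_left p _))
  refine (ZMod.intCast_zmod_eq_zero_iff_dvd _ 2).1 ?_
  rw [Int.cast_sum]
  refine CharTwo.sum_eq_zero_of_reflection (m := m) (fun j hj => ?_) (fun j hj => ?_)
    (fun j hj hjm => ?_) <;> rw [mem_filter] at hj
  · rw [mem_Icc] at hj; rw [mem_filter, mem_Icc]
    exact ⟨by omega, ⟨by omega, by omega⟩, (Nat.even_sub (by omega)).2 (iff_of_true hmeven hj.2)⟩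
  · exact (hreflect j hj.1 hj.2).symm
  · rw [hℓ0 j (hmid j hjm hj.2), Int.cast_zero]

theorem Complex.isPrimitiveRoot_exp_pi_mul_I_div {m : ℕ} (hm : m ≠ 0) :
    IsPrimitiveRoot (exp (Real.pi * I / m)) (2 * m) := by
  convert isPrimitiveRoot_exp (2 * m) (by omega) using 2
  push_cast
  field_simp

open Complex Real

theorem pgst_parity_general (p t : ℕ) (hp : p.Prime) (hodd : Odd p) (ht : 1 ≤ t)
    (m : ℕ) (hm : m = 2 ^ t * p)
    (ζ : ℂ) (hζ : ζ = Complex.exp (Real.pi * Complex.I / m))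
    (ℓ : ℕ → ℤ) (hℓ0 : ∀ j, 2 * p ∣ j → ℓ j = 0)
    (hzero : ∑ j ∈ Finset.Icc 1 (m - 1), (ℓ j : ℂ) * (ζ ^ (j : ℤ) + ζ ^ (-(j : ℤ))) = 0) :
    (∑ j ∈ (Finset.Icc 1 (m - 1)).filter (fun j => Even j), ℓ j) % 2 = ℓ (2 * p) % 2 ∧
    ℓ (2 * p) % 2 = 0 := by
  have := Fact.mk hp
  have hm0 : 0 < m := hm ▸ Nat.mul_pos (by positivity) hp.pos
  have hdvd : cyclotomic (2 * m) ℤ ∣ reflectionDiffPoly m ℓ :=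
    cyclotomic_dvd_reflectionDiffPoly hm0 (hζ ▸ isPrimitiveRoot_exp_pi_mul_I_div hm0.ne') hzero
  have heven := two_dvd_sum_filter_even hodd ht hm hℓ0 fun j hj hje =>
    intCast_zmod_two_eq_reflect_of_even hodd ht hm hℓ0 hdvd hj hje
  rw [hℓ0 _ dvd_rfl]
  omega

theorem pgst_parity (p t : ℕ) (hp : p.Prime) (hodd : Odd p) (ht : 1 ≤ t)
    (m : ℕ) (hm : m = 2 ^ t * p) (a : ℕ) (ha : 2 ^ (t - 1) ∣ a)
    (ζ : ℂ) (hζ : ζ = Complex.exp (Real.pi * Complex.I / m))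
    (ℓ : ℕ → ℤ) (hℓ0 : ∀ j, 2 * p ∣ j → ℓ j = 0)
    (hzero : ∑ j ∈ Finset.Icc 1 (m - 1), (ℓ j : ℂ) * (ζ ^ (j : ℤ) + ζ ^ (-(j : ℤ))) = 0)
    (hsum : ∑ j ∈ Finset.Icc 1 (m - 1), ℓ j = 0) :
    (∑ j ∈ (Finset.Icc 1 (m - 1)).filter (fun j => Even j), ℓ j) % 2 = ℓ (2 * p) % 2 ∧
    ℓ (2 * p) % 2 = 0 :=
  pgst_parity_general p t hp hodd ht m hm ζ hζ ℓ hℓ0 hzero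
end
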